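/- arXiv:1103.1585 — 5 statements merged into one kernel-verified Lean document; each statement's English description precedes it below -/
import Mathlib

section
/- The partition function satisfies MacMahon's recurrence: for n ≥ 1, Σ_{m ∈ ℤ} (−1)^m p(n − m(3m−1)/2) = 0, i.e., p(n) = p(n−1) + p(n−2) − p(n−5) − p(n−7) + p(n−12) + p(n−15) − ···, where p(k) = 0 for k < 0 and the sum is over all integers m with m(3m−1)/2 ≤ n. -/
/-!
Multiplying the generating function `∑ p(n) Xⁿ = ∏ 1 / (1 - Xⁱ)` by Euler's product
`∏ (1 - Xⁱ) = ∑ (-1)ᵐ X^{m(3m-1)/2}` gives `1`; the recurrence is the vanishing of the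
coefficient of `Xⁿ`, `n ≥ 1`, in that product.
-/

/-- The partition function, extended by `0` to negative integer arguments. -/
noncomputable def partitionExt (k : ℤ) : ℤ :=
  if 0 ≤ k then (Fintype.card (Nat.Partition k.toNat) : ℤ) else 0

open Finset PowerSeries
open scoped PowerSeries.WithPiTopology

theorem natAbs_le_pentagonal (m : ℤ) : m.natAbs ≤ pentagonal m := by
  have h := two_mul_natCast_pentagonal m
  zify
  rcases le_or_gt 0 m with hm | hm
  · rw [abs_of_nonneg hm]; nlinarith
  · rw [abs_of_neg hm]; nlinarith

namespace PowerSeries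

variable (R : Type*) [CommRing R]

theorem mk_card_partition_mul_pentagonalSeries :
    (mk fun n ↦ (Fintype.card n.Partition : R)) * pentagonalSeries R = 1 := by
  -- The identity is algebraic; any Hausdorff ring topology on `R`, e.g. the discrete one, lets us
  -- multiply the two infinite products factor by factor.
  let _ : TopologicalSpace R := ⊥
  have : DiscreteTopology R := ⟨rfl⟩
  have hP : HasProd (fun i ↦ ∑' j : ℕ, (X : R⟦X⟧) ^ ((i + 1) * j))
      (mk fun n ↦ (Fintype.card n.Partition : R)) := by
    simpa [Nat.Partition.restricted] using
      Nat.Partition.hasProd_powerSeriesMk_card_restricted R (fun _ ↦ True)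
  refine (hP.mul (WithPiTopology.hasProd_one_sub_X_pow R)).unique ?_
  convert hasProd_one with i
  simp_rw [pow_mul]
  exact WithPiTopology.tsum_pow_mul_one_sub_of_constantCoeff_eq_zero (by simp)

theorem sum_range_coeff_pentagonalSeries_mul (g : ℕ → R) (N : ℕ) :
    ∑ k ∈ range (N + 1), (pentagonalSeries R).coeff k * g k =
      ∑ m ∈ Icc (-(N : ℤ)) N with pentagonal m ≤ N,
        (-1 : R) ^ m.natAbs * g (pentagonal m) := by
  classical
  symm
  simp_rw [← Int.coe_negOnePow, ← coeff_pentagonalSeries_pentagonal R]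
  rw [← sum_image (f := fun k ↦ (pentagonalSeries R).coeff k * g k)
    fun a _ b _ h ↦ pentagonal_injective h]
  apply sum_subset
  · intro k hk
    obtain ⟨m, hm, rfl⟩ := mem_image.mp hk
    exact mem_range_succ_iff.mpr (mem_filter.mp hm).2
  · rintro k hk hk_notMem
    refine mul_eq_zero_of_left (coeff_pentagonalSeries_eq_zero R ?_) _
    rintro ⟨m, rfl⟩
    have hm := natAbs_le_pentagonal m
    have hmN := mem_range_succ_iff.mp hk
    refine hk_notMem (mem_image_of_mem _ (mem_filter.mpr ⟨mem_Icc.mpr ?_, hmN⟩))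
    omega

end PowerSeries

theorem partitionExt_sub_pentagonal (n : ℕ) (m : ℤ) :
    partitionExt ((n : ℤ) - m * (3 * m - 1) / 2) =
      if pentagonal m ≤ n then (Fintype.card (n - pentagonal m).Partition : ℤ) else 0 := by
  rw [partitionExt, ← natCast_pentagonal]
  by_cases h : pentagonal m ≤ n
  · rw [if_pos (by omega), if_pos h, ← Nat.cast_sub h, Int.toNat_natCast]
  · rw [if_neg (by omega), if_neg h]

/-- MacMahon's recurrence: for `n ≥ 1`,
`∑_{m ∈ ℤ} (-1)^m p(n - m(3m-1)/2) = 0`, where `p(k) = 0` for `k < 0`.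
(Terms with generalized pentagonal number `m(3m-1)/2 > n` vanish, so the sum may be
taken over `-n ≤ m ≤ n`.) -/
theorem macmahon_recurrence (n : ℕ) (hn : 1 ≤ n) :
    ∑ m ∈ Finset.Icc (-(n : ℤ)) (n : ℤ),
      (-1 : ℤ) ^ m.natAbs * partitionExt ((n : ℤ) - m * (3 * m - 1) / 2) = 0 := by
  calc _ = ∑ m ∈ Icc (-(n : ℤ)) n with pentagonal m ≤ n,
        (-1 : ℤ) ^ m.natAbs * (Fintype.card (n - pentagonal m).Partition : ℤ) := by
        rw [sum_filter]
        refine sum_congr rfl fun m _ ↦ ?_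
        rw [partitionExt_sub_pentagonal]
        split_ifs <;> simp
    _ = (pentagonalSeries ℤ * mk fun k ↦ (Fintype.card k.Partition : ℤ)).coeff n := by
        rw [← sum_range_coeff_pentagonalSeries_mul ℤ
            fun k ↦ (Fintype.card (n - k).Partition : ℤ),
          coeff_mul, Nat.sum_antidiagonal_eq_sum_range_succ_mk]
        simp
    _ = 0 := by
        rw [mul_comm, mk_card_partition_mul_pentagonalSeries, coeff_one, if_neg (by omega)]
end

section
/- The n-th Bernoulli number satisfies B_n = Σ_{K=0}^{n} (−1)^K Σ_{q_1,...,q_K ≥ 1, q_1+···+q_K = n} (1/((q_1+1)···(q_K+1))) · n!/(q_1!···q_K!), where the inner sum is over compositions of n into K positive parts. -/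
/-!
With `f(z) = (e^z - 1)/z - 1 = ∑_{q ≥ 1} z^q / (q+1)!` the Bernoulli generating function is
`z/(e^z - 1) = 1/(1 + f) = ∑_K (-f)^K`. Since `f` has no constant term, only `K ≤ n` contribute
to the coefficient of `z^n`, and the coefficient of `z^n` in `f^K` is the sum over compositions
`(q_1, …, q_K)` of `n` of `∏ 1/(q_i+1)!`. Multiplying by `n!` turns each term into
`∏ 1/(q_i+1) · n!/(q_1!⋯q_K!)`.
-/

open PowerSeries Finset
open scoped Nat

theorem factorial_sum_mul_prod_one_div_factorial_succ {F ι : Type*} [Field F] [CharZero F]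
    (s : Finset ι) (q : ι → ℕ) :
    ((∑ i ∈ s, q i)! : F) * ∏ i ∈ s, (1 : F) / ((q i + 1)! : F) =
      (∏ i ∈ s, (1 : F) / ((q i : F) + 1)) * (Nat.multinomial s q : F) := by
  rw [← Nat.multinomial_spec]
  simp only [Nat.factorial_succ]
  push_cast
  simp only [one_div, mul_inv, prod_mul_distrib, prod_inv_distrib]
  have hprod : (∏ i ∈ s, ((q i)! : F)) ≠ 0 :=
    prod_ne_zero_iff.mpr fun i _ => Nat.cast_ne_zero.mpr (q i).factorial_ne_zero
  field_simp

namespace PowerSeries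

section Coefficients

variable {R : Type*}

theorem coeff_pow_eq_sum_antidiagonalTuple [CommSemiring R] (p : R⟦X⟧) (K n : ℕ) :
    coeff n (p ^ K) = ∑ q ∈ Nat.antidiagonalTuple K n, ∏ i, coeff (q i) p := by
  rw [← Fin.prod_const, coeff_prod, ← piAntidiag_univ_fin_eq_antidiagonalTuple]
  refine sum_nbij' (⇑) Finsupp.equivFunOnFinite.symm ?_ ?_ ?_ ?_ ?_ <;> simp

theorem coeff_pow_eq_sum_of_constantCoeff_eq_zero [CommSemiring R] {p : R⟦X⟧}
    (hp : constantCoeff p = 0) (K n : ℕ) :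
    coeff n (p ^ K) = ∑ q ∈ (Nat.antidiagonalTuple K n).filter (fun q => ∀ i, 1 ≤ q i),
      ∏ i, coeff (q i) p := by
  rw [coeff_pow_eq_sum_antidiagonalTuple, sum_filter_of_ne]
  intro q _ hq i
  by_contra! h
  exact hq (prod_eq_zero (mem_univ i) (by simp_all))

theorem coeff_eq_sum_range_neg_one_pow_mul_coeff_pow [CommRing R] {f g : R⟦X⟧}
    (hf : constantCoeff f = 0) (hg : g * (1 + f) = 1) (n : ℕ) :
    coeff n g = ∑ K ∈ range (n + 1), (-1) ^ K * coeff n (f ^ K) := by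
  have htail : coeff n (g * (-f) ^ (n + 1)) = 0 := by
    have : X ^ (n + 1) ∣ g * (-f) ^ (n + 1) :=
      (pow_dvd_pow_of_dvd (X_dvd_iff.mpr (by simp [hf])) _).mul_left g
    exact X_pow_dvd_iff.mp this n n.lt_succ_self
  have hgeom : g - g * (-f) ^ (n + 1) = ∑ K ∈ range (n + 1), (-f) ^ K := by
    linear_combination g * geom_sum_mul (-f) (n + 1) + (∑ K ∈ range (n + 1), (-f) ^ K) * hg
  have hcoeff := congrArg (coeff n) hgeom
  rw [map_sub, htail, sub_zero, map_sum] at hcoeff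
  rw [hcoeff]
  refine sum_congr rfl fun K _ => ?_
  rw [neg_pow, ← map_one C, ← map_neg, ← map_pow, coeff_C_mul]

end Coefficients

section ExpSubOneDivX

variable (A : Type*) [CommRing A] [Algebra ℚ A]

noncomputable def expSubOneDivX : A⟦X⟧ :=
  mk fun q => algebraMap ℚ A (1 / (q + 1)!)

@[simp]
theorem coeff_expSubOneDivX (q : ℕ) :
    coeff q (expSubOneDivX A) = algebraMap ℚ A (1 / (q + 1)!) :=
  coeff_mk _ _

theorem X_mul_expSubOneDivX : X * expSubOneDivX A = exp A - 1 := by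
  ext (_ | q) <;> simp [coeff_succ_X_mul]

theorem bernoulliPowerSeries_mul_expSubOneDivX :
    bernoulliPowerSeries A * expSubOneDivX A = 1 :=
  X_mul_cancel <| by
    rw [mul_left_comm, X_mul_expSubOneDivX, bernoulliPowerSeries_mul_exp_sub_one, mul_one]

theorem constantCoeff_expSubOneDivX_sub_one : constantCoeff (expSubOneDivX A - 1) = 0 := by
  rw [map_sub, ← coeff_zero_eq_constantCoeff_apply, coeff_expSubOneDivX]
  simp

end ExpSubOneDivX

end PowerSeries

/-- `B_n = ∑_{K=0}^n (-1)^K ∑_{compositions (q_1,…,q_K) of n}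
(1/((q_1+1)⋯(q_K+1))) · n!/(q_1!⋯q_K!)`. -/
theorem bernoulli_eq_sum_compositions (n : ℕ) :
    bernoulli n =
      ∑ K ∈ Finset.range (n + 1), (-1 : ℚ) ^ K *
        ∑ q ∈ (Finset.Nat.antidiagonalTuple K n).filter (fun q => ∀ i, 1 ≤ q i),
          (∏ i : Fin K, (1 : ℚ) / ((q i : ℚ) + 1)) * (Nat.multinomial Finset.univ q : ℚ) := by
  have hf := constantCoeff_expSubOneDivX_sub_one ℚ
  have hinv : bernoulliPowerSeries ℚ * (1 + (expSubOneDivX ℚ - 1)) = 1 := by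
    rw [add_sub_cancel, bernoulliPowerSeries_mul_expSubOneDivX]
  have hbernoulli : bernoulli n = n ! * coeff n (bernoulliPowerSeries ℚ) := by
    have : (n ! : ℚ) ≠ 0 := Nat.cast_ne_zero.mpr n.factorial_ne_zero
    simp [bernoulliPowerSeries, mul_div_cancel₀ _ this]
  rw [hbernoulli, coeff_eq_sum_range_neg_one_pow_mul_coeff_pow hf hinv, mul_sum]
  refine sum_congr rfl fun K _ => ?_
  rw [coeff_pow_eq_sum_of_constantCoeff_eq_zero hf, mul_left_comm, mul_sum]
  congr 1
  refine sum_congr rfl fun q hq => ?_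
  obtain ⟨hsum, hpos⟩ := mem_filter.mp hq
  rw [← Nat.mem_antidiagonalTuple.mp hsum, ← factorial_sum_mul_prod_one_div_factorial_succ]
  congr 1
  refine prod_congr rfl fun i _ => ?_
  simp [coeff_one, Nat.one_le_iff_ne_zero.mp (hpos i)]
end

section
/- For n ≠ 1, the Bernoulli number satisfies B_n = (1/(2 − 2^n)) Σ_{K=0}^{⌊n/2⌋} (−1)^K Σ_{q_1,...,q_K ≥ 1, 2q_1+···+2q_K = n} (1/((2q_1+1)···(2q_K+1))) · n!/((2q_1)!···(2q_K)!), a sum over compositions of n into even parts. -/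
/-!
Halving the generating function of the Bernoulli numbers gives
`z / sinh z = 2z / (e^z - 1) - 2z / (e^{2z} - 1)`, whose `n`-th coefficient is `(2 - 2^n) B_n / n!`.
Its inverse `S = sinh z / z` satisfies `z² ∣ 1 - S`, so `z / sinh z = ∑_K (1 - S)^K` and only
`K ≤ n / 2` contribute to the coefficient of `z^n`. Expanding `(1 - S)^K` over compositions of `n`
into `K` positive even parts `2q_i` gives the formula; the factor `1 / (2q_i + 1)` comes from
`(2q_i + 1)! = (2q_i + 1) (2q_i)!`.
-/

open PowerSeries Finset Nat

theorem PowerSeries.coeff_eq_sum_coeff_one_sub_pow {R : Type*} [CommRing R] {A S : R⟦X⟧}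
    (hAS : A * S = 1) {k M n : ℕ} (hdvd : X ^ k ∣ 1 - S) (hn : n < k * M) :
    coeff n A = ∑ K ∈ range M, coeff n ((1 - S) ^ K) := by
  have hA : A = ∑ K ∈ range M, (1 - S) ^ K + A * (1 - S) ^ M := by
    have hgeom := geom_sum_mul_neg (1 - S) M
    rw [sub_sub_cancel] at hgeom
    linear_combination (∑ K ∈ range M, (1 - S) ^ K) * hAS - A * hgeom
  have htail : coeff n (A * (1 - S) ^ M) = 0 := by
    have hdvd' : X ^ (k * M) ∣ A * (1 - S) ^ M :=
      (pow_mul (X : R⟦X⟧) k M ▸ pow_dvd_pow_of_dvd hdvd M).mul_left A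
    exact X_pow_dvd_iff.mp hdvd' n hn
  rw [hA, map_add, map_sum, htail, add_zero]

/-- A composition of `n` into `K` even parts `2 q i`, recorded by the halves `q`; the bound
`q i ≤ n` only serves to make the set finite. -/
def evenCompositions (n K : ℕ) : Finset (Fin K → ℕ) :=
  (Fintype.piFinset fun _ : Fin K => range (n + 1)).filter
    (fun q => (∀ i, 1 ≤ q i) ∧ ∑ i : Fin K, 2 * q i = n)

theorem mem_evenCompositions {n K : ℕ} {q : Fin K → ℕ} :
    q ∈ evenCompositions n K ↔ (∀ i, 1 ≤ q i) ∧ ∑ i, 2 * q i = n := by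
  rw [evenCompositions, mem_filter, Fintype.mem_piFinset, and_iff_right_iff_imp]
  rintro ⟨-, hsum⟩ i
  have := single_le_sum (fun j _ => Nat.zero_le (2 * q j)) (mem_univ i)
  rw [mem_range]
  omega

theorem PowerSeries.coeff_pow_eq_sum_evenCompositions {R : Type*} [CommSemiring R] {f : R⟦X⟧}
    (hf : ∀ j, coeff j f ≠ 0 → Even j ∧ j ≠ 0) (n K : ℕ) :
    coeff n (f ^ K) = ∑ q ∈ evenCompositions n K, ∏ i, coeff (2 * q i) f := by
  classical
  rw [← Fin.prod_const, coeff_prod]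
  symm
  refine sum_bij_ne_zero (fun q _ _ => Finsupp.equivFunOnFinite.symm (2 * q)) ?_ ?_ ?_ ?_
  · intro q hq _
    simp [mem_finsuppAntidiag, (mem_evenCompositions.mp hq).2]
  · intro q _ _ p _ _ h
    funext i
    simpa using congrArg (· i) h
  · intro l hl hne
    have hl' : ∀ i, Even (l i) ∧ l i ≠ 0 := fun i =>
      hf _ fun h0 => hne (prod_eq_zero (mem_univ i) h0)
    have hhalf : ∀ i, 2 * (l i / 2) = l i := fun i => Nat.two_mul_div_two_of_even (hl' i).1
    refine ⟨fun i => l i / 2, mem_evenCompositions.mpr ⟨fun i => ?_, ?_⟩,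
      by simpa only [hhalf] using hne, ?_⟩
    · have := hhalf i
      have := (hl' i).2
      omega
    · simp only [hhalf]
      exact (mem_finsuppAntidiag.mp hl).1
    · ext i
      simp [hhalf]
  · intro q _ _
    simp

theorem prod_one_div_succ_mul_multinomial {ι F : Type*} [Field F] [CharZero F] (s : Finset ι)
    (m : ι → ℕ) :
    (∏ i ∈ s, (1 : F) / (m i + 1)) * (multinomial s m : F) =
      (∑ i ∈ s, m i)! * ∏ i ∈ s, (1 : F) / (m i + 1)! := by
  have hspec : (∏ i ∈ s, ((m i)! : F)) * multinomial s m = (∑ i ∈ s, m i)! := by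
    exact_mod_cast multinomial_spec s m
  have hsucc : ∏ i ∈ s, ((m i + 1)! : F) = (∏ i ∈ s, ((m i : F) + 1)) * ∏ i ∈ s, ((m i)! : F) := by
    rw [← prod_mul_distrib]
    refine prod_congr rfl fun i _ => ?_
    push_cast [factorial_succ]
    ring
  have hfac : ∏ i ∈ s, ((m i)! : F) ≠ 0 :=
    prod_ne_zero_iff.mpr fun i _ => Nat.cast_ne_zero.mpr (factorial_ne_zero _)
  have hsucc0 : ∏ i ∈ s, ((m i : F) + 1) ≠ 0 :=
    prod_ne_zero_iff.mpr fun i _ => Nat.cast_add_one_ne_zero _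
  simp only [one_div, prod_inv_distrib]
  rw [hsucc, ← hspec]
  field_simp

noncomputable def sinhDivX : ℚ⟦X⟧ :=
  mk fun n => if Even n then 1 / (n + 1)! else 0

theorem two_mul_X_mul_sinhDivX : 2 * (X * sinhDivX) = exp ℚ - rescale (-1) (exp ℚ) := by
  ext n
  rw [map_sub, coeff_rescale, coeff_exp, ← map_ofNat C, coeff_C_mul]
  rcases n with _ | m
  · simp
  · rw [coeff_succ_X_mul, sinhDivX, coeff_mk]
    rcases Nat.even_or_odd m with hm | hm
    · rw [if_pos hm, hm.add_one.neg_one_pow]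
      simp only [one_div, Algebra.algebraMap_self, map_inv₀, map_natCast, neg_mul, one_mul,
        sub_neg_eq_add]
      ring
    · rw [if_neg (Nat.not_even_iff_odd.mpr hm), hm.add_one.neg_one_pow]
      simp

theorem coeff_one_sub_sinhDivX (j : ℕ) :
    coeff j (1 - sinhDivX) = if Even j ∧ j ≠ 0 then -(1 / (j + 1)! : ℚ) else 0 := by
  rw [map_sub, coeff_one, sinhDivX, coeff_mk]
  rcases eq_or_ne j 0 with rfl | hj
  · simp
  · by_cases he : Even j <;> simp [hj, he]

noncomputable def zDivSinh : ℚ⟦X⟧ :=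
  2 * bernoulliPowerSeries ℚ - rescale 2 (bernoulliPowerSeries ℚ)

theorem coeff_zDivSinh (n : ℕ) : coeff n zDivSinh = (2 - 2 ^ n) * bernoulli n / n ! := by
  rw [zDivSinh, map_sub, ← map_ofNat C, coeff_C_mul, coeff_rescale, bernoulliPowerSeries,
    coeff_mk]
  simp only [Algebra.algebraMap_self, RingHom.id_apply]
  ring

theorem zDivSinh_mul_sinhDivX : zDivSinh * sinhDivX = 1 := by
  have hB := bernoulliPowerSeries_mul_exp_sub_one ℚ
  have hB2 : rescale 2 (bernoulliPowerSeries ℚ) * (exp ℚ ^ 2 - 1) = 2 * X := by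
    have := congrArg (rescale (2 : ℚ)) hB
    rwa [map_mul, map_sub, map_one, rescale_X, map_ofNat C 2, ← Nat.cast_ofNat,
      ← exp_pow_eq_rescale_exp] at this
  have hE : exp ℚ * rescale (-1) (exp ℚ) = 1 := exp_mul_exp_neg_eq_one
  have h2X : (2 * X : ℚ⟦X⟧) ≠ 0 := by
    rw [← map_ofNat C 2]
    exact mul_ne_zero (by simp) X_ne_zero
  refine mul_left_cancel₀ h2X ?_
  calc 2 * X * (zDivSinh * sinhDivX)
      = zDivSinh * (exp ℚ ^ 2 - 1) * rescale (-1) (exp ℚ) := by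
        linear_combination zDivSinh * two_mul_X_mul_sinhDivX - zDivSinh * exp ℚ * hE
    _ = 2 * X * 1 := by
        rw [zDivSinh]
        linear_combination (2 * (exp ℚ + 1) * hB - hB2) * rescale (-1) (exp ℚ) + 2 * X * hE

theorem factorial_mul_coeff_one_sub_sinhDivX_pow (n K : ℕ) :
    (n ! : ℚ) * coeff n ((1 - sinhDivX) ^ K) =
      (-1) ^ K * ∑ q ∈ evenCompositions n K,
        (∏ i, (1 : ℚ) / (2 * (q i : ℚ) + 1)) * (multinomial univ (fun i => 2 * q i) : ℚ) := by
  have hsupp : ∀ j, coeff j (1 - sinhDivX) ≠ 0 → Even j ∧ j ≠ 0 := fun j hj => by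
    rw [coeff_one_sub_sinhDivX] at hj
    split_ifs at hj with h
    exacts [h, absurd rfl hj]
  rw [coeff_pow_eq_sum_evenCompositions hsupp, mul_sum, mul_sum]
  refine sum_congr rfl fun q hq => ?_
  obtain ⟨hpos, rfl⟩ := mem_evenCompositions.mp hq
  have hcoeff : ∀ i, coeff (2 * q i) (1 - sinhDivX) = -1 * (1 / (2 * q i + 1)! : ℚ) := fun i => by
    rw [coeff_one_sub_sinhDivX, if_pos ⟨even_two_mul _, by have := hpos i; omega⟩]
    ring
  have hmult := prod_one_div_succ_mul_multinomial (F := ℚ) univ (fun i => 2 * q i)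
  push_cast at hmult
  rw [prod_congr rfl fun i _ => hcoeff i, prod_mul_distrib, Fin.prod_const, hmult]
  ring

/-- For `n ≠ 1`:
`B_n = (1/(2-2^n)) ∑_{K=0}^{⌊n/2⌋} (-1)^K ∑_{2q_1+⋯+2q_K = n, q_i ≥ 1}
(1/((2q_1+1)⋯(2q_K+1))) · n!/((2q_1)!⋯(2q_K)!)`. -/
theorem bernoulli_eq_sum_even_compositions (n : ℕ) (hn : n ≠ 1) :
    bernoulli n =
      (1 / (2 - 2 ^ n : ℚ)) *
        ∑ K ∈ Finset.range (n / 2 + 1), (-1 : ℚ) ^ K *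
          ∑ q ∈ (Fintype.piFinset fun _ : Fin K => Finset.range (n + 1)).filter
              (fun q => (∀ i, 1 ≤ q i) ∧ ∑ i : Fin K, 2 * q i = n),
            (∏ i : Fin K, (1 : ℚ) / (2 * (q i : ℚ) + 1)) *
              (Nat.multinomial Finset.univ (fun i => 2 * q i) : ℚ) := by
  have hne : (2 - 2 ^ n : ℚ) ≠ 0 := fun h =>
    hn (pow_right_injective₀ two_pos (by norm_num) (by linear_combination -h : (2 : ℚ) ^ n = 2 ^ 1))
  have hdvd : X ^ 2 ∣ 1 - sinhDivX :=
    X_pow_dvd_iff.mpr fun m hm => by interval_cases m <;> simp [coeff_one_sub_sinhDivX]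
  have hcoeff := coeff_eq_sum_coeff_one_sub_pow zDivSinh_mul_sinhDivX hdvd
    (show n < 2 * (n / 2 + 1) by omega)
  calc bernoulli n = 1 / (2 - 2 ^ n) * (n ! * coeff n zDivSinh) := by
        rw [coeff_zDivSinh]
        field_simp
    _ = _ := by
        rw [hcoeff, mul_sum]
        simp_rw [factorial_mul_coeff_one_sub_sinhDivX_pow]
        rfl
end

section
/- For n > 1, the Euler number satisfies E_n = Σ_{N=1}^{⌊n/2⌋} (−1)^N Σ (n−1)!/((2q_1−1)!···(2q_{2N−1}−1)!), where the inner sum is over all compositions of n−1 into 2N−1 odd positive parts 2q_i − 1 with 1 ≤ q_i ≤ ⌊n/2⌋. -/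
/-!
Write `C = cosh` and `S = sinh` as formal power series. Since `C² = 1 + S²`,
`(1/C)' = -S/C² = -S/(1 + S²) = ∑_{N ≥ 1} (-1)^N S^{2N-1}`, and truncating the geometric
series at `N = ⌊n/2⌋` leaves a multiple of `S^{2⌊n/2⌋+1}`, whose order exceeds `n - 1`. The
coefficient of `z^{n-1}` is `E_n/(n-1)!` on the left, while multiplying out `S^{2N-1}` expresses
its coefficient as a sum of `∏ 1/(2q_i-1)!` over compositions of `n-1` into `2N-1` odd parts.
-/

/-- The power series `cosh z = ∑_{q} z^{2q}/(2q)!`. -/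
noncomputable def coshPS : PowerSeries ℚ :=
  PowerSeries.mk fun q => if Even q then ((q.factorial : ℚ))⁻¹ else 0

/-- The Euler numbers, defined by `1/cosh z = ∑_q E_q z^q/q!` (so `E_n = 0` for odd `n`). -/
noncomputable def eulerNumber (n : ℕ) : ℚ :=
  (n.factorial : ℚ) * PowerSeries.coeff n coshPS⁻¹

open PowerSeries Finset
open scoped Nat

noncomputable def sinhPS : ℚ⟦X⟧ :=
  mk fun q => if Odd q then ((q ! : ℚ))⁻¹ else 0

lemma coeff_coshPS (n : ℕ) : coeff n coshPS = if Even n then ((n ! : ℚ))⁻¹ else 0 :=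
  coeff_mk _ _

lemma coeff_sinhPS (n : ℕ) : coeff n sinhPS = if Odd n then ((n ! : ℚ))⁻¹ else 0 :=
  coeff_mk _ _

lemma coshPS_add_sinhPS : coshPS + sinhPS = exp ℚ := by
  ext n
  rcases Nat.even_or_odd n with h | h <;>
    simp [coeff_coshPS, coeff_sinhPS, h, Nat.not_odd_iff_even, Nat.not_even_iff_odd]

lemma coshPS_sub_sinhPS : coshPS - sinhPS = evalNegHom (exp ℚ) := by
  ext n
  change _ = coeff n (rescale (-1) (exp ℚ))
  rw [coeff_rescale]
  rcases Nat.even_or_odd n with h | h <;>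
    simp [coeff_coshPS, coeff_sinhPS, h, h.neg_one_pow, Nat.not_odd_iff_even, Nat.not_even_iff_odd]

lemma coshPS_sq_sub_sinhPS_sq : coshPS ^ 2 - sinhPS ^ 2 = 1 := by
  rw [sq_sub_sq, coshPS_add_sinhPS, coshPS_sub_sinhPS, exp_mul_exp_neg_eq_one]

lemma constantCoeff_coshPS : constantCoeff coshPS = 1 := by
  simp [← coeff_zero_eq_constantCoeff_apply, coeff_coshPS]

lemma derivative_coshPS : d⁄dX ℚ coshPS = sinhPS := by
  ext n
  rw [coeff_derivative, coeff_coshPS, coeff_sinhPS]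
  rcases Nat.even_or_odd n with h | h
  · simp [Nat.even_add_one, h, Nat.not_odd_iff_even.2 h]
  · rw [if_pos (Nat.even_add_one.2 (Nat.not_even_iff_odd.2 h)), if_pos h, Nat.factorial_succ]
    push_cast
    field_simp

lemma X_dvd_sinhPS : X ∣ sinhPS := by
  simp [X_dvd_iff, ← coeff_zero_eq_constantCoeff_apply, coeff_sinhPS]

lemma sum_Icc_neg_one_pow_mul_pow_mul_one_add_sq {R : Type*} [CommRing R] (s : R) (M : ℕ) :
    (∑ N ∈ Icc 1 M, (-1) ^ N * s ^ (2 * N - 1)) * (1 + s ^ 2) =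
      -s + (-1) ^ M * s ^ (2 * M + 1) := by
  induction M with
  | zero => simp
  | succ M ih =>
    rw [sum_Icc_succ_top (by omega), add_mul, ih, show 2 * (M + 1) - 1 = 2 * M + 1 by omega]
    ring

lemma sum_Icc_neg_one_pow_mul_sinhPS_pow (M : ℕ) :
    ∑ N ∈ Icc 1 M, (-1) ^ N * sinhPS ^ (2 * N - 1) =
      d⁄dX ℚ coshPS⁻¹ + (-1) ^ M * sinhPS ^ (2 * M + 1) * coshPS⁻¹ ^ 2 := by
  have hinv : (1 + sinhPS ^ 2) * coshPS⁻¹ ^ 2 = 1 := by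
    rw [show 1 + sinhPS ^ 2 = coshPS ^ 2 by linear_combination -coshPS_sq_sub_sinhPS_sq,
      ← mul_pow, PowerSeries.mul_inv_cancel _ (by simp [constantCoeff_coshPS]), one_pow]
  calc ∑ N ∈ Icc 1 M, (-1) ^ N * sinhPS ^ (2 * N - 1)
      = (∑ N ∈ Icc 1 M, (-1) ^ N * sinhPS ^ (2 * N - 1)) * (1 + sinhPS ^ 2) *
          coshPS⁻¹ ^ 2 := by
        rw [mul_assoc, hinv, mul_one]
    _ = _ := by
        rw [sum_Icc_neg_one_pow_mul_pow_mul_one_add_sq, derivative_inv', derivative_coshPS]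
        ring

lemma factorial_sum_mul_prod_coeff_sinhPS {ι : Type*} (s : Finset ι) (l : ι → ℕ)
    (hl : ∀ i ∈ s, Odd (l i)) :
    ((∑ i ∈ s, l i)! : ℚ) * ∏ i ∈ s, coeff (l i) sinhPS = Nat.multinomial s l := by
  rw [prod_congr rfl fun i hi => by rw [coeff_sinhPS, if_pos (hl i hi)], prod_inv_distrib,
    ← Nat.multinomial_spec, Nat.cast_mul, Nat.cast_prod]
  have : (∏ i ∈ s, ((l i)! : ℚ)) ≠ 0 := prod_ne_zero_iff.2 fun i _ => by positivity
  field_simp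

lemma sum_multinomial_odd_compositions {ι : Type*} [Fintype ι] [DecidableEq ι] (m B : ℕ)
    (hB : m ≤ 2 * B) :
    ∑ q ∈ (Fintype.piFinset fun _ : ι => Icc 1 B).filter (fun q => ∑ i, (2 * q i - 1) = m),
      (Nat.multinomial univ (fun i => 2 * q i - 1) : ℚ) =
      m ! * coeff m (sinhPS ^ Fintype.card ι) := by
  -- Only the all-odd terms `l` of `coeff m (∏ sinhPS)` survive; they are `l = 2 q - 1`.
  rw [← card_univ, ← prod_const, coeff_prod, mul_sum,
    ← sum_filter_of_ne (s := finsuppAntidiag univ m) (p := fun l => ∀ i, Odd (l i))]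
  · refine sum_nbij' (fun q => Finsupp.equivFunOnFinite.symm fun i => 2 * q i - 1)
      (fun l i => (l i + 1) / 2) ?_ ?_ ?_ ?_ ?_
    · intro q hq
      simp only [mem_filter, Fintype.mem_piFinset, mem_Icc] at hq
      simp only [mem_filter, mem_finsuppAntidiag, Finsupp.coe_equivFunOnFinite_symm, hq.2,
        subset_univ, and_self, true_and, Nat.odd_iff]
      intro i
      have := (hq.1 i).1
      omega
    · intro l hl
      simp only [mem_filter, mem_finsuppAntidiag, Nat.odd_iff] at hl
      obtain ⟨⟨hsum, -⟩, hodd⟩ := hl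
      have hle (i : ι) : l i ≤ m :=
        hsum ▸ single_le_sum (fun _ _ => Nat.zero_le _) (mem_univ i)
      simp only [mem_filter, Fintype.mem_piFinset, mem_Icc]
      refine ⟨fun i => ?_, hsum ▸ sum_congr rfl fun i _ => ?_⟩
      · have := hodd i; have := hle i; omega
      · have := hodd i; omega
    · intro q hq
      simp only [mem_filter, Fintype.mem_piFinset, mem_Icc] at hq
      funext i
      simp only [Finsupp.coe_equivFunOnFinite_symm]
      have := (hq.1 i).1
      omega
    · intro l hl
      simp only [mem_filter, Nat.odd_iff] at hl
      ext i
      simp only [Finsupp.coe_equivFunOnFinite_symm]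
      have := hl.2 i
      omega
    · intro q hq
      simp only [mem_filter, Fintype.mem_piFinset, mem_Icc] at hq
      rw [Finsupp.coe_equivFunOnFinite_symm, ← hq.2, factorial_sum_mul_prod_coeff_sinhPS]
      intro i _
      have := (hq.1 i).1
      exact Nat.odd_iff.2 (by omega)
  · intro l _ hl
    by_contra! h
    obtain ⟨i, hi⟩ := h
    exact hl (by rw [prod_eq_zero (mem_univ i) (by rw [coeff_sinhPS, if_neg hi]), mul_zero])

/-- For `n > 1`:
`E_n = ∑_{N=1}^{⌊n/2⌋} (-1)^N ∑ (n-1)!/((2q_1-1)!⋯(2q_{2N-1}-1)!)`, the inner sum over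
all tuples `1 ≤ q_i ≤ ⌊n/2⌋` with `∑ (2q_i - 1) = n - 1` (compositions of `n-1` into
`2N-1` odd positive parts). -/
theorem euler_eq_sum_odd_compositions (n : ℕ) (hn : 1 < n) :
    eulerNumber n =
      ∑ N ∈ Finset.Icc 1 (n / 2), (-1 : ℚ) ^ N *
        ∑ q ∈ (Fintype.piFinset fun _ : Fin (2 * N - 1) => Finset.Icc 1 (n / 2)).filter
            (fun q => ∑ i : Fin (2 * N - 1), (2 * q i - 1) = n - 1),
          (Nat.multinomial Finset.univ (fun i => 2 * q i - 1) : ℚ) := by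
  have hremainder : coeff (n - 1)
      ((-1) ^ (n / 2) * sinhPS ^ (2 * (n / 2) + 1) * coshPS⁻¹ ^ 2) = 0 :=
    X_pow_dvd_iff.1 (((pow_dvd_pow_of_dvd X_dvd_sinhPS _).mul_left _).mul_right _) _ (by omega)
  have hseries : ∑ N ∈ Icc 1 (n / 2), (-1 : ℚ) ^ N * coeff (n - 1) (sinhPS ^ (2 * N - 1)) =
      coeff n coshPS⁻¹ * n := by
    simp_rw [← coeff_C_mul, map_pow, map_neg, map_one, ← map_sum,
      sum_Icc_neg_one_pow_mul_sinhPS_pow, map_add, hremainder, add_zero, coeff_derivative,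
      Nat.sub_add_cancel hn.le, Nat.cast_sub hn.le]
    ring
  simp_rw [sum_multinomial_odd_compositions (ι := Fin _) (n - 1) (n / 2) (by omega),
    Fintype.card_fin, mul_left_comm _ ((n - 1)! : ℚ), ← mul_sum, hseries, eulerNumber,
    ← Nat.mul_factorial_pred (by omega : n ≠ 0)]
  push_cast
  ring
end

section
/- The Stirling numbers of the second kind satisfy S(n, n−p) = (n!/(n−p)!) · Σ over tuples (k_1,...,k_p) of non-negative integers with Σ_m m·k_m = p of binom(n−p, K) · (K!/(k_1!···k_p!)) · (1/2!)^{k_1} (1/3!)^{k_2} ··· (1/(p+1)!)^{k_p}, where K = k_1 + ··· + k_p, valid for 0 ≤ p ≤ n. -/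
/-- Stirling numbers of the second kind: `S(n,k)` is the number of partitions of an
`n`-element set into `k` non-empty blocks, given by the standard recurrence. -/
def stirling2 : ℕ → ℕ → ℕ
  | 0, 0 => 1
  | 0, _ + 1 => 0
  | _ + 1, 0 => 0
  | n + 1, k + 1 => (k + 1) * stirling2 n (k + 1) + stirling2 n k

/-!
Since `F = eˣ - 1` satisfies `F' = 1 + F`, the recurrence for `S` shows that `Fᵏ / k!` is the
exponential generating function of `S(·, k)`. Writing `F = x E` with `E = ∑ xᵐ / (m + 1)!`,
this says `S(N + p, N) N! / (N + p)! = [xᵖ] Eᴺ`. Only the terms of `E` of degree at most `p`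
matter, and expanding `(1 + ∑_{m=1}^{p} xᵐ / (m + 1)!)ᴺ` with the binomial and multinomial
theorems gives the sum over partitions of `p`.
-/

open PowerSeries Nat Finset

variable {R : Type*}

theorem coeff_pow_eq_of_X_pow_dvd_sub [CommRing R] {f g : R⟦X⟧} {p : ℕ}
    (h : X ^ (p + 1) ∣ f - g) (N : ℕ) : coeff p (f ^ N) = coeff p (g ^ N) := by
  rw [← sub_eq_zero, ← map_sub]
  exact X_pow_dvd_iff.mp (h.trans (sub_dvd_pow_sub_pow f g N)) p p.lt_succ_self

theorem coeff_one_add_pow [CommSemiring R] (G : R⟦X⟧) (N p : ℕ) :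
    coeff p ((1 + G) ^ N) = ∑ K ∈ range (N + 1), N.choose K * coeff p (G ^ K) := by
  rw [add_comm, add_pow, map_sum]
  refine sum_congr rfl fun K _ => ?_
  rw [one_pow, mul_one, ← map_natCast (C (R := R)), coeff_mul_C, mul_comm]

/-- `k i` is the multiplicity of the part `i + 1` in a partition of `p`. -/
def partitionMultiplicities (p : ℕ) : Finset (Fin p → ℕ) :=
  (Fintype.piFinset fun _ : Fin p => range (p + 1)).filter
    (fun k => ∑ i : Fin p, ((i : ℕ) + 1) * k i = p)

theorem mem_partitionMultiplicities {p : ℕ} {k : Fin p → ℕ} :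
    k ∈ partitionMultiplicities p ↔ ∑ i : Fin p, ((i : ℕ) + 1) * k i = p := by
  refine ⟨fun hk => (mem_filter.mp hk).2, fun hk => mem_filter.mpr ⟨?_, hk⟩⟩
  refine Fintype.mem_piFinset.mpr fun i => mem_range.mpr (Nat.lt_succ_of_le ?_)
  calc k i ≤ ((i : ℕ) + 1) * k i := Nat.le_mul_of_pos_left _ i.val.succ_pos
    _ ≤ ∑ j : Fin p, ((j : ℕ) + 1) * k j :=
      single_le_sum (f := fun j : Fin p => ((j : ℕ) + 1) * k j) (fun _ _ => Nat.zero_le _)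
        (mem_univ i)
    _ = p := hk

theorem coeff_sum_C_mul_X_pow_succ_pow [CommSemiring R] {p : ℕ} (c : Fin p → R) (K : ℕ) :
    coeff p ((∑ i : Fin p, C (c i) * X ^ ((i : ℕ) + 1)) ^ K) =
      ∑ k ∈ partitionMultiplicities p with ∑ i, k i = K,
        Nat.multinomial univ k * ∏ i, c i ^ k i := by
  have hterm : ∀ k : Fin p → ℕ, (Nat.multinomial univ k : R⟦X⟧) *
      ∏ i, (C (c i) * X ^ ((i : ℕ) + 1)) ^ k i =
        C (Nat.multinomial univ k * ∏ i, c i ^ k i) *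
          X ^ (∑ i : Fin p, ((i : ℕ) + 1) * k i) := by
    intro k
    simp only [mul_pow, prod_mul_distrib, ← pow_mul, prod_pow_eq_pow_sum, map_mul, map_prod,
      map_pow, map_natCast]
    ring
  simp only [sum_pow_eq_sum_piAntidiag, hterm, map_sum, coeff_C_mul_X_pow]
  rw [sum_ite, sum_const_zero, add_zero]
  refine sum_congr (ext fun k => ?_) fun _ _ => rfl
  simp [mem_partitionMultiplicities, eq_comm, and_comm]

theorem coeff_one_add_sum_C_mul_X_pow_succ_pow [CommSemiring R] {p : ℕ} (c : Fin p → R)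
    (N : ℕ) :
    coeff p ((1 + ∑ i : Fin p, C (c i) * X ^ ((i : ℕ) + 1)) ^ N) =
      ∑ k ∈ partitionMultiplicities p,
        N.choose (∑ i, k i) * Nat.multinomial univ k * ∏ i, c i ^ k i := by
  rw [coeff_one_add_pow]
  simp_rw [coeff_sum_C_mul_X_pow_succ_pow, mul_sum]
  calc _ = ∑ K ∈ range (N + 1), ∑ k ∈ partitionMultiplicities p with ∑ i, k i = K,
        N.choose (∑ i, k i) * (Nat.multinomial univ k * ∏ i, c i ^ k i) :=
        sum_congr rfl fun K _ => sum_congr rfl fun k hk => by rw [(mem_filter.mp hk).2]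
    _ = _ := by
      rw [sum_fiberwise_eq_sum_filter, sum_filter_of_ne]
      · simp only [mul_assoc]
      · intro k _ hk
        by_contra hN
        rw [Nat.choose_eq_zero_of_lt (by simpa using hN), Nat.cast_zero, zero_mul] at hk
        exact hk rfl

theorem factorial_mul_stirlingSecond_eq_coeff_exp_sub_one_pow {A : Type*} [CommRing A]
    [Algebra ℚ A] (n k : ℕ) :
    (k ! * stirlingSecond n k : A) = n ! * coeff n ((exp A - 1) ^ k) := by
  induction n generalizing k with
  | zero => cases k <;> simp
  | succ n ih =>
    cases k with
    | zero => simp [coeff_one]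
    | succ k =>
      have hD : d⁄dX A ((exp A - 1) ^ (k + 1)) =
          (k + 1 : A⟦X⟧) * ((exp A - 1) ^ k + (exp A - 1) ^ (k + 1)) := by
        rw [derivative_pow, map_sub, derivative_exp, derivative_one]
        push_cast
        ring
      have hc := congrArg (coeff n) hD
      rw [coeff_derivative, show (k + 1 : A⟦X⟧) = C (k + 1 : A) by simp, coeff_C_mul,
        map_add] at hc
      have ih' := ih (k + 1)
      rw [factorial_succ] at ih'
      rw [stirlingSecond_succ_succ, factorial_succ, factorial_succ]
      push_cast at ih' ⊢
      linear_combination -(n ! : A) * hc + (k + 1 : A) * (ih k + ih')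

theorem stirling2_eq_stirlingSecond : stirling2 = Nat.stirlingSecond := by
  funext n k
  induction n generalizing k with
  | zero => cases k <;> simp [stirling2]
  | succ n ih => cases k <;> simp [stirling2, stirlingSecond_succ_succ, ih]

theorem exp_sub_one_eq_X_mul_mk_inv_factorial_succ :
    exp ℚ - 1 = X * PowerSeries.mk (fun m => ((m + 1)! : ℚ)⁻¹) := by
  ext (_ | m) <;> simp [coeff_succ_X_mul]

theorem X_pow_succ_dvd_mk_inv_factorial_succ_sub (p : ℕ) :
    X ^ (p + 1) ∣ PowerSeries.mk (fun m => ((m + 1)! : ℚ)⁻¹) -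
      (1 + ∑ i : Fin p, C (((i : ℕ) + 2)! : ℚ)⁻¹ * X ^ ((i : ℕ) + 1)) := by
  refine X_pow_dvd_iff.mpr fun m hm => ?_
  rcases m with _ | m
  · simp
  · rw [map_sub, map_add, map_sum, coeff_mk, coeff_one, if_neg m.succ_ne_zero, zero_add,
      sub_eq_zero]
    simp only [coeff_C_mul_X_pow]
    rw [Fin.sum_univ_eq_sum_range (fun i => if m + 1 = i + 1 then ((i + 2)! : ℚ)⁻¹ else 0)]
    simp [Nat.lt_of_succ_lt_succ hm]

/-- `S(n, n-p) = (n!/(n-p)!) ∑_{∑ m k_m = p} C(n-p, K) · K!/(k_1!⋯k_p!) ·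
(1/2!)^{k_1}⋯(1/(p+1)!)^{k_p}`, where `K = ∑ k_m`, for `0 ≤ p ≤ n`. -/
theorem stirling2_eq_sum_partitions (n p : ℕ) (hp : p ≤ n) :
    (stirling2 n (n - p) : ℚ) =
      ((n.factorial : ℚ) / ((n - p).factorial : ℚ)) *
        ∑ k ∈ (Fintype.piFinset fun _ : Fin p => Finset.range (p + 1)).filter
            (fun k => ∑ i : Fin p, ((i : ℕ) + 1) * k i = p),
          ((n - p).choose (∑ i : Fin p, k i) : ℚ) *
            (Nat.multinomial Finset.univ k : ℚ) *
            ∏ i : Fin p, ((((i : ℕ) + 2).factorial : ℚ)⁻¹) ^ k i := by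
  obtain ⟨N, rfl⟩ := Nat.exists_eq_add_of_le hp
  have h := factorial_mul_stirlingSecond_eq_coeff_exp_sub_one_pow (A := ℚ) (p + N) N
  rw [exp_sub_one_eq_X_mul_mk_inv_factorial_succ, mul_pow, coeff_X_pow_mul,
    coeff_pow_eq_of_X_pow_dvd_sub (X_pow_succ_dvd_mk_inv_factorial_succ_sub p),
    coeff_one_add_sum_C_mul_X_pow_succ_pow] at h
  rw [Nat.add_sub_cancel_left, stirling2_eq_stirlingSecond, div_mul_eq_mul_div,
    eq_div_iff (by positivity)]
  exact (mul_comm _ _).trans h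
end
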